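/- arXiv:1812.01256 — 4 statements merged into one kernel-verified Lean document; each statement's English description precedes it below -/
import Mathlib

section
/- Let M be a disconnected binary matroid and let X be a nonempty independent set in M. Then the Γ-extension matroid M^X is connected if and only if every component of M contains an element of X. -/
/-!
In a finitary matroid, lying on a common circuit is a transitive relation (strong circuit
elimination), so a matroid is connected iff any two of its elements lie on a common circuit.

For `i ≠ j` the set `{x i, x j, g i, g j}` is a circuit of `M^X`, and `M` is the restriction of
`M^X` to `S`. Hence if every component of `M` meets `X`, every element of `M^X` is linked to `X`
and the elements of `X` are linked to each other; disconnectedness of `M` forces `|X| ≥ 2`, which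
is what puts each `g i` on such a circuit. Conversely, a binary cycle splits along the components
of `M`. If the component `D` of `e` misses `X`, take a circuit `C` of `M^X` through `e`: replacing
each `g i ∈ C` by `x i` gives a cycle of `M` with the same part in `D`, so `C ∩ D` is already a
cycle of `M^X`, whence `C ⊆ D` and `C` contains no `g i`.
-/

open Set
open scoped Classical

/-- A circuit of a matroid: a minimal dependent set. -/
def MatroidCircuit {α : Type*} (M : Matroid α) (C : Set α) : Prop :=
  M.Dep C ∧ ∀ D ⊂ C, ¬ M.Dep D

/-- A cocircuit of a matroid: a circuit of the dual matroid. -/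
def MatroidCocircuit {α : Type*} (M : Matroid α) (C : Set α) : Prop :=
  MatroidCircuit M✶ C

/-- The rank of a set in a matroid, as an extended natural number: the supremum of the
cardinalities of independent subsets of the set. -/
noncomputable def matroidERk {α : Type*} (M : Matroid α) (A : Set α) : ℕ∞ :=
  ⨆ I : {I : Set α // M.Indep I ∧ I ⊆ A}, (I : Set α).encard

/-- The rank of a matroid. -/
noncomputable def matroidERank {α : Type*} (M : Matroid α) : ℕ∞ :=
  matroidERk M M.E

/-- Deletion of a set from a matroid: the restriction to the complement. -/
def matroidDelete {α : Type*} (M : Matroid α) (Y : Set α) : Matroid α :=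
  M.restrict (M.E \ Y)

/-- A `k`-separation of a matroid `M`: a partition of the ground set into disjoint sets `A`, `B`
with `min (|A|, |B|) ≥ k` and `r(A) + r(B) - r(M) ≤ k - 1`. -/
def KSeparation {α : Type*} (M : Matroid α) (k : ℕ) (A B : Set α) : Prop :=
  Disjoint A B ∧ A ∪ B = M.E ∧ (k : ℕ∞) ≤ A.encard ∧ (k : ℕ∞) ≤ B.encard ∧
    matroidERk M A + matroidERk M B ≤ matroidERank M + ((k : ℕ∞) - 1)

/-- For `k ≥ 2`, a matroid is `k`-connected if it has no `(k-1)`-separation. -/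
def KConnected {α : Type*} (M : Matroid α) (k : ℕ) : Prop :=
  ∀ A B : Set α, ¬ KSeparation M (k - 1) A B

/-- The relation `e ~ f` iff `e = f` or some circuit contains both `e` and `f`. -/
def ConnRel {α : Type*} (M : Matroid α) (e f : α) : Prop :=
  e = f ∨ ∃ C, MatroidCircuit M C ∧ e ∈ C ∧ f ∈ C

/-- A component of a matroid: an equivalence class of the relation `ConnRel` on the
ground set. -/
def MatroidComponent {α : Type*} (M : Matroid α) (D : Set α) : Prop :=
  ∃ e ∈ M.E, D = {f ∈ M.E | ConnRel M e f}

/-- A matroid is connected if it has exactly one component. -/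
def MatroidConnected {α : Type*} (M : Matroid α) : Prop :=
  ∃! D : Set α, MatroidComponent M D

/-- `M` is the vector matroid over GF(2) of the matrix with column set `S` whose column at
`e ∈ S` is `A e`: a set is independent iff it is a subset of `S` whose columns are linearly
independent over GF(2). -/
def IsBinaryRep {α ρ : Type*} (M : Matroid α) (S : Set α) (A : α → ρ → ZMod 2) : Prop :=
  M.E = S ∧ ∀ I : Set α, M.Indep I ↔ I ⊆ S ∧ LinearIndependent (ZMod 2) (fun e : I => A e.1)

/-- The columns of the matrix `A^X` of the Γ-extension: for each index `i`, the new column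
labelled `g i` agrees with the column of `x i` in the old rows and has entry `1` in the new
row (indexed by `none`), while every old column keeps its entries in the old rows and has
entry `0` in the new row. -/
noncomputable def gammaCols {α ρ ι : Type*} (A : α → ρ → ZMod 2) (x g : ι → α) :
    α → Option ρ → ZMod 2 := fun e o =>
  if h : ∃ i, g i = e then o.elim 1 (fun r => A (x h.choose) r)
  else o.elim 0 (fun r => A e r)

open scoped symmDiff

namespace ZModModule

variable {α W : Type*} [AddCommGroup W] [Module (ZMod 2) W]

lemma sum_symmDiff [DecidableEq α] (s t : Finset α) (v : α → W) :
    ∑ i ∈ s ∆ t, v i = ∑ i ∈ s, v i + ∑ i ∈ t, v i := by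
  have hunion : s ∆ t ∪ s ∩ t = s ∪ t := symmDiff_sup_inf s t
  have hdisj : Disjoint (s ∆ t) (s ∩ t) := disjoint_symmDiff_inf s t
  rw [← Finset.sum_union_inter, ← hunion, Finset.sum_union hdisj, add_assoc, add_self, add_zero]

lemma linearIndepOn_iff {v : α → W} {s : Set α} :
    LinearIndepOn (ZMod 2) v s ↔ ∀ t : Finset α, ↑t ⊆ s → t.Nonempty → ∑ i ∈ t, v i ≠ 0 := by
  rw [linearIndepOn_iff']
  constructor
  · rintro h t hts ⟨i, hi⟩ hsum
    simpa using h t 1 hts (by simpa using hsum) i hi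
  · intro h t c hts hsum i hi
    by_contra hci
    refine h (t.filter (c · ≠ 0)) ((Finset.coe_subset.2 (Finset.filter_subset _ _)).trans hts)
      ⟨i, by simp [hi, hci]⟩ ?_
    rw [Finset.sum_filter]
    refine (Finset.sum_congr rfl fun j _ => ?_).trans hsum
    rcases (by decide : ∀ a : ZMod 2, a = 0 ∨ a = 1) (c j) with hc | hc <;> simp [hc]

end ZModModule

section Connectivity

variable {α : Type*} {M : Matroid α} {C : Set α} {e f g : α}

lemma matroidCircuit_iff_isCircuit : MatroidCircuit M C ↔ M.IsCircuit C := by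
  rw [Matroid.isCircuit_iff_forall_ssubset, MatroidCircuit]
  exact and_congr_right fun hC =>
    forall₂_congr fun D hD => Matroid.not_dep_iff (hD.subset.trans hC.subset_ground)

lemma connRel_iff : ConnRel M e f ↔ e = f ∨ ∃ C, M.IsCircuit C ∧ e ∈ C ∧ f ∈ C := by
  simp only [ConnRel, matroidCircuit_iff_isCircuit]

lemma ConnRel.symm (hef : ConnRel M e f) : ConnRel M f e := by
  rcases connRel_iff.1 hef with rfl | ⟨C, hC, he, hf⟩
  exacts [Or.inl rfl, connRel_iff.2 (Or.inr ⟨C, hC, hf, he⟩)]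

/-- Induction on `|C₁ ∪ C₂|`: strong elimination of a common element `y` yields circuits
`C₃ ∋ e` and `C₄ ∋ f` inside `(C₁ ∪ C₂) \ {y}`, and one of the pairs `(C₃, C₂)`, `(C₃, C₄)`
has a strictly smaller union. -/
lemma Matroid.IsCircuit.exists_isCircuit_mem_mem_of_inter_nonempty [M.Finitary]
    {C₁ C₂ : Set α} (hC₁ : M.IsCircuit C₁) (hC₂ : M.IsCircuit C₂) (he : e ∈ C₁) (hf : f ∈ C₂)
    (hne : (C₁ ∩ C₂).Nonempty) : ∃ C, M.IsCircuit C ∧ e ∈ C ∧ f ∈ C := by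
  obtain ⟨n, hn⟩ : ∃ n, (C₁ ∪ C₂).ncard = n := ⟨_, rfl⟩
  induction n using Nat.strong_induction_on generalizing C₁ C₂ with
  | _ n ih =>
  obtain ⟨y, hy₁, hy₂⟩ := hne
  by_cases he₂ : e ∈ C₂
  · exact ⟨C₂, hC₂, he₂, hf⟩
  by_cases hf₁ : f ∈ C₁
  · exact ⟨C₁, hC₁, he, hf₁⟩
  have descend : ∀ {C₃ C₄ : Set α}, M.IsCircuit C₃ → M.IsCircuit C₄ → e ∈ C₃ → f ∈ C₄ →
      (C₃ ∩ C₄).Nonempty → C₃ ∪ C₄ ⊂ C₁ ∪ C₂ → ∃ C, M.IsCircuit C ∧ e ∈ C ∧ f ∈ C :=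
    fun hC₃ hC₄ he₃ hf₄ hne hss =>
      ih _ (hn ▸ Set.ncard_lt_ncard hss (hC₁.finite.union hC₂.finite)) hC₃ hC₄ he₃ hf₄ hne rfl
  obtain ⟨C₃, hC₃sub, hC₃, he₃⟩ := hC₁.strong_elimination hC₂ hy₁ hy₂ he he₂
  obtain ⟨C₄, hC₄sub, hC₄, hf₄⟩ := hC₂.strong_elimination hC₁ hy₂ hy₁ hf hf₁
  have hy₃ : y ∉ C₃ := fun hy => (hC₃sub hy).2 rfl
  have hy₄ : y ∉ C₄ := fun hy => (hC₄sub hy).2 rfl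
  by_cases hsub : C₁ \ C₂ ⊆ C₃
  · obtain ⟨z, hz₄, hz₂⟩ := Set.not_subset.1 fun h₄ =>
      hC₂.not_ssubset hC₄ ((Set.ssubset_iff_of_subset h₄).2 ⟨y, hy₂, hy₄⟩)
    have hz₁ : z ∈ C₁ := (hC₄sub hz₄).1.resolve_left hz₂
    refine descend hC₃ hC₄ he₃ hf₄ ⟨z, hsub ⟨hz₁, hz₂⟩, hz₄⟩
      ((Set.ssubset_iff_of_subset (Set.union_subset ?_ ?_)).2 ⟨y, Set.mem_union_left _ hy₁, ?_⟩)
    · exact hC₃sub.trans Set.sdiff_subset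
    · exact hC₄sub.trans (Set.sdiff_subset.trans (Set.union_comm _ _).subset)
    · rintro (hy | hy)
      exacts [hy₃ hy, hy₄ hy]
  · obtain ⟨z, ⟨hz₁, hz₂⟩, hz₃⟩ := Set.not_subset.1 hsub
    obtain ⟨w, hw₃, hw₁⟩ := Set.not_subset.1 fun h₃ =>
      hC₁.not_ssubset hC₃ ((Set.ssubset_iff_of_subset h₃).2 ⟨y, hy₁, hy₃⟩)
    have hw₂ : w ∈ C₂ := (hC₃sub hw₃).1.resolve_left hw₁
    refine descend hC₃ hC₂ he₃ hf ⟨w, hw₃, hw₂⟩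
      ((Set.ssubset_iff_of_subset (Set.union_subset (hC₃sub.trans Set.sdiff_subset)
        Set.subset_union_right)).2 ⟨z, Set.mem_union_left _ hz₁, ?_⟩)
    rintro (hz | hz)
    exacts [hz₃ hz, hz₂ hz]

lemma ConnRel.trans [M.Finitary] (hef : ConnRel M e f) (hfg : ConnRel M f g) :
    ConnRel M e g := by
  rcases connRel_iff.1 hef with rfl | ⟨C₁, hC₁, he, hf₁⟩
  · exact hfg
  rcases connRel_iff.1 hfg with rfl | ⟨C₂, hC₂, hf₂, hg⟩
  · exact hef
  exact connRel_iff.2 (Or.inr (hC₁.exists_isCircuit_mem_mem_of_inter_nonempty hC₂ he hg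
    ⟨f, hf₁, hf₂⟩))

lemma ConnRel.mem_ground (hef : ConnRel M e f) (he : e ∈ M.E) : f ∈ M.E := by
  rcases connRel_iff.1 hef with rfl | ⟨C, hC, -, hf⟩
  exacts [he, hC.subset_ground hf]

lemma ConnRel.of_restrict {R : Set α} (hR : R ⊆ M.E) (hef : ConnRel (M.restrict R) e f) :
    ConnRel M e f := by
  rcases connRel_iff.1 hef with rfl | ⟨C, hC, he, hf⟩
  exacts [Or.inl rfl,
    connRel_iff.2 (Or.inr ⟨C, ((Matroid.restrict_isCircuit_iff hR).1 hC).1, he, hf⟩)]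

lemma matroidConnected_iff :
    MatroidConnected M ↔ M.E.Nonempty ∧ ∀ e ∈ M.E, ∀ f ∈ M.E, ConnRel M e f := by
  constructor
  · rintro ⟨D, ⟨e₀, he₀, -⟩, huniq⟩
    refine ⟨⟨e₀, he₀⟩, fun e he f hf => ?_⟩
    have hclass : {a ∈ M.E | ConnRel M f a} = {a ∈ M.E | ConnRel M e a} :=
      (huniq _ ⟨f, hf, rfl⟩).trans (huniq _ ⟨e, he, rfl⟩).symm
    exact (hclass.subset ⟨hf, Or.inl rfl⟩).2
  · rintro ⟨⟨e₀, he₀⟩, htot⟩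
    have hclass : ∀ e ∈ M.E, {a ∈ M.E | ConnRel M e a} = M.E := fun e he =>
      Set.sep_eq_self_iff_mem_true.2 fun a ha => htot e he a ha
    refine ⟨M.E, ⟨e₀, he₀, (hclass e₀ he₀).symm⟩, ?_⟩
    rintro D ⟨e, he, rfl⟩
    exact hclass e he

lemma forall_matroidComponent_inter_nonempty_iff {X : Set α} (hX : X ⊆ M.E) :
    (∀ D, MatroidComponent M D → (D ∩ X).Nonempty) ↔ ∀ e ∈ M.E, ∃ a ∈ X, ConnRel M e a := by
  constructor
  · intro h e he
    obtain ⟨a, ⟨-, hea⟩, haX⟩ := h _ ⟨e, he, rfl⟩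
    exact ⟨a, haX, hea⟩
  · rintro h D ⟨e, he, rfl⟩
    obtain ⟨a, haX, hea⟩ := h e he
    exact ⟨a, ⟨hX haX, hea⟩, haX⟩

lemma Matroid.IsCircuit.subset_or_disjoint_setOf_connRel [M.Finitary] (hC : M.IsCircuit C)
    (e : α) : C ⊆ {f | ConnRel M e f} ∨ Disjoint C {f | ConnRel M e f} := by
  rw [or_iff_not_imp_right, Set.not_disjoint_iff]
  rintro ⟨c, hcC, hc⟩ f hf
  exact ConnRel.trans hc (connRel_iff.2 (Or.inr ⟨C, hC, hcC, hf⟩))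

end Connectivity

namespace IsBinaryRep

variable {α ρ : Type*} {M : Matroid α} {S : Set α} {A : α → ρ → ZMod 2}

lemma indep_iff (hM : IsBinaryRep M S A) {I : Set α} :
    M.Indep I ↔ I ⊆ S ∧ ∀ t : Finset α, ↑t ⊆ I → t.Nonempty → ∑ e ∈ t, A e ≠ 0 := by
  rw [hM.2, ← ZModModule.linearIndepOn_iff]
  rfl

lemma dep_of_sum_eq_zero (hM : IsBinaryRep M S A) {t : Finset α} (hts : ↑t ⊆ S)
    (ht : t.Nonempty) (hsum : ∑ e ∈ t, A e = 0) : M.Dep t :=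
  ⟨fun hI => (hM.indep_iff.1 hI).2 t subset_rfl ht hsum, hM.1 ▸ hts⟩

lemma exists_sum_eq_zero_of_dep (hM : IsBinaryRep M S A) {D : Set α} (hD : M.Dep D) :
    ∃ t : Finset α, ↑t ⊆ D ∧ t.Nonempty ∧ ∑ e ∈ t, A e = 0 := by
  have hnot := hD.not_indep
  rw [hM.indep_iff] at hnot
  push Not at hnot
  exact hnot (hM.1 ▸ hD.subset_ground)

lemma exists_finset_of_isCircuit (hM : IsBinaryRep M S A) {C : Set α} (hC : M.IsCircuit C) :
    ∃ t : Finset α, C = ↑t ∧ ∑ e ∈ t, A e = 0 := by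
  obtain ⟨t, htC, htne, hsum⟩ := hM.exists_sum_eq_zero_of_dep hC.dep
  have htS : ↑t ⊆ S := hM.1 ▸ htC.trans hC.subset_ground
  exact ⟨t, (hC.eq_of_dep_subset (hM.dep_of_sum_eq_zero htS htne hsum) htC).symm, hsum⟩

lemma isCircuit_of_forall_sum_eq_zero (hM : IsBinaryRep M S A) {t : Finset α} (hts : ↑t ⊆ S)
    (ht : t.Nonempty) (hsum : ∑ e ∈ t, A e = 0)
    (hmin : ∀ u ⊆ t, u.Nonempty → ∑ e ∈ u, A e = 0 → u = t) : M.IsCircuit t := by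
  refine Matroid.isCircuit_iff.2 ⟨hM.dep_of_sum_eq_zero hts ht hsum, fun D hD hDt => ?_⟩
  obtain ⟨u, huD, hune, husum⟩ := hM.exists_sum_eq_zero_of_dep hD
  obtain rfl := hmin u (Finset.coe_subset.1 (huD.trans hDt)) hune husum
  exact hDt.antisymm huD

lemma finitary (hM : IsBinaryRep M S A) : M.Finitary :=
  Matroid.finitary_iff_forall_isCircuit_finite.2 fun _ hC => by
    obtain ⟨t, rfl, -⟩ := hM.exists_finset_of_isCircuit hC
    exact t.finite_toSet

/-- A cycle is a disjoint union of circuits, so its part in a union `D` of components of `M`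
is again a cycle. -/
lemma sum_filter_eq_zero (hM : IsBinaryRep M S A) {D : Set α}
    (hD : ∀ C, M.IsCircuit C → C ⊆ D ∨ Disjoint C D) {t : Finset α} (hts : ↑t ⊆ S)
    (hsum : ∑ e ∈ t, A e = 0) : ∑ e ∈ t with e ∈ D, A e = 0 := by
  induction t using Finset.strongInduction with
  | H t ih =>
  rcases t.eq_empty_or_nonempty with rfl | ht
  · simp
  obtain ⟨C, hCt, hC⟩ := (hM.dep_of_sum_eq_zero hts ht hsum).exists_isCircuit_subset
  obtain ⟨u, rfl, husum⟩ := hM.exists_finset_of_isCircuit hC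
  have hut : u ⊆ t := Finset.coe_subset.1 hCt
  have hrest : ∑ e ∈ t \ u, A e = 0 := by
    rw [Finset.sum_sdiff_eq_sub hut, hsum, husum, sub_zero]
  have ih' := ih (t \ u) (Finset.sdiff_ssubset hut (Finset.coe_nonempty.1 hC.nonempty))
    ((Finset.coe_subset.2 Finset.sdiff_subset).trans hts) hrest
  rw [Finset.sum_filter] at ih' ⊢
  rw [← Finset.sum_sdiff hut, ih', zero_add]
  rcases hD _ hC with hu | hu
  · exact (Finset.sum_congr rfl fun e he => if_pos (hu he)).trans husum
  · exact Finset.sum_eq_zero fun e he => if_neg (Set.disjoint_left.1 hu he)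

end IsBinaryRep

section GammaExtension

variable {α ρ ι : Type*} {M MX : Matroid α} {S : Set α} {A : α → ρ → ZMod 2} {x g : ι → α}
  {e : α}

lemma gammaCols_of_notMem_range (he : e ∉ Set.range g) :
    gammaCols A x g e = fun o => o.elim 0 (A e) := by
  funext o
  simp only [gammaCols, dif_neg (show ¬ ∃ i, g i = e from he)]

lemma gammaCols_apply_self (hg : g.Injective) (i : ι) :
    gammaCols A x g (g i) = fun o => o.elim 1 (A (x i)) := by
  have hex : ∃ j, g j = g i := ⟨i, rfl⟩
  funext o
  simp only [gammaCols, dif_pos hex, hg hex.choose_spec]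

lemma sum_gammaCols_eq_zero_iff {t : Finset α} (ht : Disjoint (t : Set α) (Set.range g)) :
    ∑ e ∈ t, gammaCols A x g e = 0 ↔ ∑ e ∈ t, A e = 0 := by
  have hsum : ∑ e ∈ t, gammaCols A x g e = fun o => o.elim 0 (∑ e ∈ t, A e) := by
    rw [Finset.sum_congr rfl fun e he => gammaCols_of_notMem_range (Set.disjoint_left.1 ht he)]
    funext o
    cases o <;> simp [Finset.sum_apply]
  rw [hsum]
  constructor
  · intro h
    funext r
    exact congrFun h (some r)
  · intro h
    funext o
    cases o <;> simp [h]

lemma sum_eq_sum_filter_add_sum_preimage {W : Type*} [AddCommMonoid W] (hg : g.Injective)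
    (hdisj : Disjoint S (Set.range g)) {t : Finset α} (ht : ↑t ⊆ S ∪ Set.range g)
    (v : α → W) :
    ∑ e ∈ t, v e = ∑ e ∈ t with e ∈ S, v e + ∑ i ∈ t.preimage g hg.injOn, v (g i) := by
  rw [Finset.sum_preimage', ← Finset.sum_filter_add_sum_filter_not t (· ∈ S)]
  congr 1
  refine Finset.sum_congr (Finset.filter_congr fun e he => ?_) fun _ _ => rfl
  exact ⟨fun heS => (ht he).resolve_left heS,
    fun heg heS => Set.disjoint_left.1 hdisj heS heg⟩

lemma even_card_preimage_and_sum_eq_zero (hg : g.Injective) (hdisj : Disjoint S (Set.range g))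
    {t : Finset α} (ht : ↑t ⊆ S ∪ Set.range g) (hsum : ∑ e ∈ t, gammaCols A x g e = 0) :
    Even (t.preimage g hg.injOn).card ∧
      ∑ e ∈ t with e ∈ S, A e + ∑ i ∈ t.preimage g hg.injOn, A (x i) = 0 := by
  rw [sum_eq_sum_filter_add_sum_preimage hg hdisj ht] at hsum
  have hS : ∀ e ∈ t.filter (· ∈ S), gammaCols A x g e = fun o => o.elim 0 (A e) :=
    fun e he => gammaCols_of_notMem_range fun heg =>
      Set.disjoint_left.1 hdisj (Finset.mem_filter.1 he).2 heg
  rw [Finset.sum_congr rfl hS,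
    Finset.sum_congr rfl fun i _ => gammaCols_apply_self (A := A) (x := x) hg i] at hsum
  refine ⟨?_, ?_⟩
  · have hnone := congrFun hsum none
    simp only [Pi.add_apply, Finset.sum_apply, Option.elim_none, Finset.sum_const_zero,
      Finset.sum_const, nsmul_eq_mul, mul_one, zero_add, Pi.zero_apply] at hnone
    exact ZMod.natCast_eq_zero_iff_even.1 hnone
  · funext r
    simpa [Finset.sum_apply] using congrFun hsum (some r)

lemma IsBinaryRep.restrict_eq_of_gammaExtension (hM : IsBinaryRep M S A)
    (hMX : IsBinaryRep MX (S ∪ Set.range g) (gammaCols A x g))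
    (hdisj : Disjoint S (Set.range g)) : MX.restrict S = M := by
  refine Matroid.ext_indep (by rw [Matroid.restrict_ground_eq, hM.1]) fun I hI => ?_
  rw [Matroid.restrict_ground_eq] at hI
  have hsum : ∀ t : Finset α, ↑t ⊆ I →
      (∑ e ∈ t, gammaCols A x g e = 0 ↔ ∑ e ∈ t, A e = 0) := fun t htI =>
    sum_gammaCols_eq_zero_iff (hdisj.mono_left (htI.trans hI))
  rw [Matroid.restrict_indep_iff, hMX.indep_iff, hM.indep_iff]
  constructor
  · rintro ⟨⟨-, h⟩, -⟩
    exact ⟨hI, fun t htI htne hA => h t htI htne ((hsum t htI).2 hA)⟩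
  · rintro ⟨-, h⟩
    exact ⟨⟨hI.trans Set.subset_union_left,
      fun t htI htne hG => h t htI htne ((hsum t htI).1 hG)⟩, hI⟩

lemma ne_of_range_subset_of_disjoint (hxS : Set.range x ⊆ S)
    (hdisj : Disjoint S (Set.range g)) (k l : ι) : x k ≠ g l := fun h =>
  Set.disjoint_left.1 hdisj (hxS ⟨k, rfl⟩) ⟨l, h.symm⟩

lemma sum_gammaCols_quad (hxinj : x.Injective) (hginj : g.Injective) (hxS : Set.range x ⊆ S)
    (hdisj : Disjoint S (Set.range g)) {i j : ι} (hij : i ≠ j) :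
    ∑ e ∈ ({x i, x j, g i, g j} : Finset α), gammaCols A x g e = 0 := by
  have hxg := ne_of_range_subset_of_disjoint hxS hdisj
  have hxi : x i ∉ Set.range g := fun ⟨l, hl⟩ => hxg i l hl.symm
  have hxj : x j ∉ Set.range g := fun ⟨l, hl⟩ => hxg j l hl.symm
  rw [Finset.sum_insert (by simp [hxinj.ne hij, hxg]), Finset.sum_insert (by simp [hxg]),
    Finset.sum_pair (hginj.ne hij), gammaCols_of_notMem_range hxi,
    gammaCols_of_notMem_range hxj, gammaCols_apply_self hginj, gammaCols_apply_self hginj]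
  funext o
  cases o with
  | none => exact (by decide : (0 : ZMod 2) + (0 + (1 + 1)) = 0)
  | some r => exact (by decide : ∀ a b : ZMod 2, a + (b + (a + b)) = 0) _ _

/-- Otherwise the `S`-part of `u` and `x '' (g ⁻¹' u)` would differ by a nonempty cycle of `M`
inside the independent set `X`. -/
lemma filter_mem_eq_image_preimage (hM : IsBinaryRep M S A) (hxinj : x.Injective)
    (hginj : g.Injective) (hxS : Set.range x ⊆ S) (hdisj : Disjoint S (Set.range g))
    (hX : M.Indep (Set.range x)) {u : Finset α} (hu : ↑u ⊆ Set.range x ∪ Set.range g)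
    (husum : ∑ e ∈ u, gammaCols A x g e = 0) :
    u.filter (· ∈ S) = (u.preimage g hginj.injOn).image x := by
  obtain ⟨-, hrel⟩ := even_card_preimage_and_sum_eq_zero hginj hdisj
    (hu.trans (Set.union_subset_union_left _ hxS)) husum
  by_contra hne
  refine (hM.indep_iff.1 hX).2 _ ?_ (Finset.symmDiff_nonempty.2 hne) ?_
  · intro a ha
    rcases Finset.mem_symmDiff.1 ha with ⟨ha, -⟩ | ⟨ha, -⟩
    · obtain ⟨hau, haS⟩ := Finset.mem_filter.1 ha
      exact (hu hau).resolve_right (Set.disjoint_left.1 hdisj haS)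
    · obtain ⟨k, -, rfl⟩ := Finset.mem_image.1 ha
      exact ⟨k, rfl⟩
  · rwa [ZModModule.sum_symmDiff, Finset.sum_image hxinj.injOn]

lemma isCircuit_gammaExtension_quad (hM : IsBinaryRep M S A)
    (hMX : IsBinaryRep MX (S ∪ Set.range g) (gammaCols A x g))
    (hxinj : x.Injective) (hginj : g.Injective) (hxS : Set.range x ⊆ S)
    (hdisj : Disjoint S (Set.range g)) (hX : M.Indep (Set.range x)) {i j : ι} (hij : i ≠ j) :
    MX.IsCircuit ↑({x i, x j, g i, g j} : Finset α) := by
  have hQ : ↑({x i, x j, g i, g j} : Finset α) ⊆ Set.range x ∪ Set.range g := by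
    simp [Set.insert_subset_iff]
  have hQS := hQ.trans (Set.union_subset_union_left _ hxS)
  refine hMX.isCircuit_of_forall_sum_eq_zero hQS (by simp)
    (sum_gammaCols_quad hxinj hginj hxS hdisj hij) fun u huQ hune husum => ?_
  obtain ⟨heven, -⟩ := even_card_preimage_and_sum_eq_zero hginj hdisj
    ((Finset.coe_subset.2 huQ).trans hQS) husum
  have hT := filter_mem_eq_image_preimage hM hxinj hginj hxS hdisj hX
    ((Finset.coe_subset.2 huQ).trans hQ) husum
  set J := u.preimage g hginj.injOn
  have hJ : J ⊆ {i, j} := fun k hk => by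
    have := huQ (Finset.mem_preimage.1 hk)
    simpa [ne_of_range_subset_of_disjoint hxS hdisj, hginj.eq_iff, eq_comm] using this
  have hJne : J.Nonempty := by
    obtain ⟨a, ha⟩ := hune
    rcases hQS (huQ ha) with haS | ⟨k, rfl⟩
    · obtain ⟨k, hk, -⟩ := Finset.mem_image.1 (hT ▸ Finset.mem_filter.2 ⟨ha, haS⟩)
      exact ⟨k, hk⟩
    · exact ⟨k, Finset.mem_preimage.2 ha⟩
  have hJeq : J = {i, j} := by
    refine Finset.eq_of_subset_of_card_le hJ ?_
    rw [Finset.card_pair hij]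
    obtain ⟨m, hm⟩ := heven
    have := hJne.card_pos
    omega
  have hxu : ∀ k ∈ J, x k ∈ u := fun k hk =>
    (Finset.mem_filter.1 (hT ▸ Finset.mem_image_of_mem x hk)).1
  have hgu : ∀ k ∈ J, g k ∈ u := fun k hk => Finset.mem_preimage.1 hk
  refine huQ.antisymm fun a ha => ?_
  simp only [Finset.mem_insert, Finset.mem_singleton] at ha
  rcases ha with rfl | rfl | rfl | rfl
  exacts [hxu i (by simp [hJeq]), hxu j (by simp [hJeq]), hgu i (by simp [hJeq]),
    hgu j (by simp [hJeq])]

lemma sum_filter_eq_zero_of_gammaExtension (hM : IsBinaryRep M S A) (hxinj : x.Injective)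
    (hginj : g.Injective) (hxS : Set.range x ⊆ S) (hdisj : Disjoint S (Set.range g))
    {D : Set α} (hD : ∀ C, M.IsCircuit C → C ⊆ D ∨ Disjoint C D) (hDS : D ⊆ S)
    (hDX : Disjoint D (Set.range x)) {t : Finset α} (ht : ↑t ⊆ S ∪ Set.range g)
    (hsum : ∑ e ∈ t, gammaCols A x g e = 0) : ∑ e ∈ t with e ∈ D, A e = 0 := by
  obtain ⟨-, hrel⟩ := even_card_preimage_and_sum_eq_zero hginj hdisj ht hsum
  have hcyc := hM.sum_filter_eq_zero hD
    (t := t.filter (· ∈ S) ∆ (t.preimage g hginj.injOn).image x) ?_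
    (by rwa [ZModModule.sum_symmDiff, Finset.sum_image hxinj.injOn])
  · convert hcyc using 2
    ext a
    simp only [Finset.mem_filter, Finset.mem_symmDiff, Finset.mem_image]
    constructor
    · rintro ⟨hat, haD⟩
      exact ⟨Or.inl ⟨⟨hat, hDS haD⟩,
        fun ⟨k, _, hk⟩ => Set.disjoint_left.1 hDX haD ⟨k, hk⟩⟩, haD⟩
    · rintro ⟨⟨⟨hat, -⟩, -⟩ | ⟨⟨k, -, rfl⟩, -⟩, haD⟩
      exacts [⟨hat, haD⟩, (Set.disjoint_left.1 hDX haD ⟨k, rfl⟩).elim]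
  · intro a ha
    rcases Finset.mem_symmDiff.1 ha with ⟨ha, -⟩ | ⟨ha, -⟩
    · exact (Finset.mem_filter.1 ha).2
    · obtain ⟨k, -, rfl⟩ := Finset.mem_image.1 ha
      exact hxS ⟨k, rfl⟩

lemma exists_connRel_of_matroidConnected_gammaExtension [Nonempty ι] (hM : IsBinaryRep M S A)
    (hMX : IsBinaryRep MX (S ∪ Set.range g) (gammaCols A x g))
    (hxinj : x.Injective) (hginj : g.Injective) (hxS : Set.range x ⊆ S)
    (hdisj : Disjoint S (Set.range g)) (hconn : MatroidConnected MX) :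
    ∀ e ∈ S, ∃ i, ConnRel M e (x i) := by
  have := hM.finitary
  intro e he
  by_contra! hno
  obtain ⟨i₀⟩ := ‹Nonempty ι›
  have hg₀ : g i₀ ∉ S := Set.disjoint_right.1 hdisj ⟨i₀, rfl⟩
  obtain ⟨C, hC, heC, hgC⟩ := (connRel_iff.1 ((matroidConnected_iff.1 hconn).2 e
    (hMX.1 ▸ Or.inl he) (g i₀) (hMX.1 ▸ Or.inr ⟨i₀, rfl⟩))).resolve_left
    (fun h => hg₀ (h ▸ he))
  obtain ⟨t, rfl, htsum⟩ := hMX.exists_finset_of_isCircuit hC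
  set D := {f | ConnRel M e f}
  have hDS : D ⊆ S := fun f hf => hM.1 ▸ ConnRel.mem_ground hf (hM.1 ▸ he)
  have hDsum := sum_filter_eq_zero_of_gammaExtension hM hxinj hginj hxS hdisj
    (fun C hC => hC.subset_or_disjoint_setOf_connRel e) hDS
    (Set.disjoint_right.2 fun _ ⟨k, hk⟩ hkD => hno k (hk ▸ hkD))
    (hMX.1 ▸ hC.subset_ground) htsum
  have htD : ↑(t.filter (· ∈ D)) ⊆ S := fun a ha => hDS (Finset.mem_filter.1 ha).2
  have hdep : MX.Dep ↑(t.filter (· ∈ D)) :=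
    hMX.dep_of_sum_eq_zero (htD.trans Set.subset_union_left)
      ⟨e, Finset.mem_filter.2 ⟨heC, Or.inl rfl⟩⟩
      ((sum_gammaCols_eq_zero_iff (hdisj.mono_left htD)).2 hDsum)
  have heq := hC.eq_of_dep_subset hdep (Finset.coe_subset.2 (Finset.filter_subset _ _))
  exact hg₀ (htD (heq ▸ hgC))

lemma matroidConnected_gammaExtension_of_forall_exists_connRel [Nonempty ι]
    (hM : IsBinaryRep M S A) (hMX : IsBinaryRep MX (S ∪ Set.range g) (gammaCols A x g))
    (hxinj : x.Injective) (hginj : g.Injective) (hxS : Set.range x ⊆ S)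
    (hdisj : Disjoint S (Set.range g)) (hX : M.Indep (Set.range x))
    (hMdisconn : ¬ MatroidConnected M) (hmeet : ∀ e ∈ S, ∃ i, ConnRel M e (x i)) :
    MatroidConnected MX := by
  have := hM.finitary
  have := hMX.finitary
  obtain ⟨i₀⟩ := ‹Nonempty ι›
  have hother : ∀ i : ι, ∃ j, j ≠ i := by
    by_contra! hsingle
    obtain ⟨i, hi⟩ := hsingle
    refine hMdisconn (matroidConnected_iff.2 ⟨⟨x i, hM.1 ▸ hxS ⟨i, rfl⟩⟩, fun e he f hf => ?_⟩)
    obtain ⟨k, hk⟩ := hmeet e (hM.1 ▸ he)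
    obtain ⟨l, hl⟩ := hmeet f (hM.1 ▸ hf)
    rw [hi k] at hk
    rw [hi l] at hl
    exact hk.trans hl.symm
  have hquad : ∀ {i j}, i ≠ j → ∀ a ∈ ({x i, x j, g i, g j} : Finset α),
      ∀ b ∈ ({x i, x j, g i, g j} : Finset α), ConnRel MX a b := fun hij a ha b hb =>
    connRel_iff.2 (Or.inr ⟨_, isCircuit_gammaExtension_quad hM hMX hxinj hginj hxS hdisj hX hij,
      ha, hb⟩)
  have hxx : ∀ i j, ConnRel MX (x i) (x j) := fun i j => by
    by_cases hij : i = j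
    · exact Or.inl (congrArg x hij)
    · exact hquad hij _ (by simp) _ (by simp)
  have hreach : ∀ e ∈ S ∪ Set.range g, ∃ i, ConnRel MX e (x i) := by
    rintro e (he | ⟨i, rfl⟩)
    · obtain ⟨i, hi⟩ := hmeet e he
      refine ⟨i, ConnRel.of_restrict (hMX.1 ▸ Set.subset_union_left) ?_⟩
      rwa [hM.restrict_eq_of_gammaExtension hMX hdisj]
    · obtain ⟨j, hji⟩ := hother i
      exact ⟨i, hquad hji.symm _ (by simp) _ (by simp)⟩
  refine matroidConnected_iff.2 ⟨⟨g i₀, hMX.1 ▸ Or.inr ⟨i₀, rfl⟩⟩, fun e he f hf => ?_⟩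
  obtain ⟨i, hi⟩ := hreach e (hMX.1 ▸ he)
  obtain ⟨j, hj⟩ := hreach f (hMX.1 ▸ hf)
  exact (hi.trans (hxx i j)).trans hj.symm

end GammaExtension

theorem stmt_1_general {α ρ ι : Type*} [Nonempty ι]
    (M MX : Matroid α) (S : Set α) (A : α → ρ → ZMod 2) (x g : ι → α)
    (hxinj : Function.Injective x) (hginj : Function.Injective g)
    (hxS : Set.range x ⊆ S) (hdisj : Disjoint S (Set.range g))
    (hXindep : M.Indep (Set.range x))
    (hM : IsBinaryRep M S A)
    (hMX : IsBinaryRep MX (S ∪ Set.range g) (gammaCols A x g))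
    (hMdisconn : ¬ MatroidConnected M) :
    MatroidConnected MX ↔ ∀ D : Set α, MatroidComponent M D → (D ∩ Set.range x).Nonempty := by
  rw [forall_matroidComponent_inter_nonempty_iff (hM.1 ▸ hxS), hM.1]
  simp only [Set.exists_range_iff]
  exact ⟨exists_connRel_of_matroidConnected_gammaExtension hM hMX hxinj hginj hxS hdisj,
    matroidConnected_gammaExtension_of_forall_exists_connRel hM hMX hxinj hginj hxS hdisj
      hXindep hMdisconn⟩

/-- Theorem 2.7: For a disconnected binary matroid `M` (loopless and coloopless) and a
nonempty independent set `X = range x`, the Γ-extension `M^X` is connected iff every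
component of `M` contains an element of `X`. -/
theorem stmt_1 {α ρ ι : Type*} [Fintype ι] [Nonempty ι]
    (M MX : Matroid α) (S : Set α) (A : α → ρ → ZMod 2) (x g : ι → α)
    (hxinj : Function.Injective x) (hginj : Function.Injective g)
    (hxS : Set.range x ⊆ S) (hdisj : Disjoint S (Set.range g))
    (hXindep : M.Indep (Set.range x))
    (hM : IsBinaryRep M S A)
    (hMX : IsBinaryRep MX (S ∪ Set.range g) (gammaCols A x g))
    (hloopless : ∀ e ∈ M.E, M.Indep {e})
    (hcoloopless : ∀ e ∈ M.E, M✶.Indep {e})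
    (hMdisconn : ¬ MatroidConnected M) :
    MatroidConnected MX ↔ ∀ D : Set α, MatroidComponent M D → (D ∩ Set.range x).Nonempty :=
  stmt_1_general M MX S A x g hxinj hginj hxS hdisj hXindep hM hMX hMdisconn
end

section
/- Let M be a k-connected matroid with ground set S such that |S| ≥ 2(k−1). Then for any subset Y ⊆ S with |Y| < k, the deletion M \ Y satisfies r(M \ Y) = r(M), where r denotes the rank function. -/
/-! If `M.E \ Y` were not spanning, enlarge `Y` inside `M.E` to a set `A` with `|A| = k - 1`.
Then `M.E \ A` is not spanning either, so `r(M.E \ A) + 1 ≤ r(M)`, while `r(A) ≤ |A| = k - 1`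
and `|M.E \ A| ≥ k - 1`: the pair `(A, M.E \ A)` is a `(k - 1)`-separation. Hence `M.E \ Y` spans
`M`, and deleting `Y` does not lower the rank. -/

open Set
open scoped Classical

lemma ENat.add_le_add_sub_one {a b r : ℕ∞} {m : ℕ} (ha : a ≤ m) (hb : b + 1 ≤ r) :
    a + b ≤ r + ((m : ℕ∞) - 1) := by
  rcases m with _ | n
  · rw [Nat.cast_zero, nonpos_iff_eq_zero] at ha
    simpa [ha] using le_self_add.trans hb
  · calc a + b ≤ (n + 1 : ℕ∞) + b := by gcongr; exact_mod_cast ha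
      _ = n + (b + 1) := by ring
      _ ≤ n + r := by gcongr
      _ = r + (((n + 1 : ℕ) : ℕ∞) - 1) := by
        rw [add_comm r, ← ENat.natCast_one, ← ENat.natCast_sub, Nat.add_sub_cancel]

namespace Matroid

variable {α : Type*} {M : Matroid α} {X A : Set α}

lemma matroidERk_eq_eRk (M : Matroid α) (X : Set α) : matroidERk M X = M.eRk X := by
  obtain ⟨I, hI⟩ := M.exists_isBasis' X
  refine le_antisymm (iSup_le fun ⟨J, hJ, hJX⟩ => hJ.encard_le_eRk_of_subset hJX) ?_
  rw [← hI.encard_eq_eRk]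
  exact le_iSup (fun J : {J : Set α // M.Indep J ∧ J ⊆ X} => (J : Set α).encard)
    ⟨I, hI.indep, hI.subset⟩

lemma matroidERank_eq_eRank (M : Matroid α) : matroidERank M = M.eRank := by
  rw [matroidERank, matroidERk_eq_eRk, eRk_ground]

lemma eRk_add_one_le_eRank_of_not_spanning (hXE : X ⊆ M.E) (hX : ¬ M.Spanning X) :
    M.eRk X + 1 ≤ M.eRank := by
  obtain hfin | hinf := M.rankFinite_or_rankInfinite
  · rw [spanning_iff_eRk_le hXE, not_le] at hX
    exact Order.add_one_le_of_lt hX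
  · simp [eRank_eq_top]

lemma kSeparation_of_not_spanning_sdiff {m : ℕ} (hAE : A ⊆ M.E) (hA : A.encard = m)
    (hm : (m : ℕ∞) ≤ (M.E \ A).encard) (hns : ¬ M.Spanning (M.E \ A)) :
    KSeparation M m A (M.E \ A) := by
  refine ⟨disjoint_sdiff_right, union_sdiff_cancel hAE, hA.ge, hm, ?_⟩
  rw [matroidERank_eq_eRank, matroidERk_eq_eRk, matroidERk_eq_eRk]
  exact ENat.add_le_add_sub_one (hA ▸ M.eRk_le_encard A)
    (eRk_add_one_le_eRank_of_not_spanning sdiff_subset hns)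

end Matroid

lemma KConnected.spanning_sdiff {α : Type*} {M : Matroid α} {k : ℕ} {Y : Set α}
    (hM : KConnected M k) (hcard : ((2 * (k - 1) : ℕ) : ℕ∞) ≤ M.E.encard) (hY : Y ⊆ M.E)
    (hYcard : Y.encard < k) : M.Spanning (M.E \ Y) := by
  by_contra hns
  have hYk : Y.encard ≤ (k - 1 : ℕ) := by
    simpa [ENat.natCast_sub] using ENat.le_sub_one_of_lt hYcard
  obtain ⟨A, hYA, hAE, hA⟩ := exists_superset_subset_encard_eq hY hYk
    (le_trans (by norm_cast; omega) hcard)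
  have hB : ((k - 1 : ℕ) : ℕ∞) ≤ (M.E \ A).encard := by
    rw [← encard_sdiff_add_encard_of_subset hAE, hA, two_mul, Nat.cast_add] at hcard
    exact (ENat.add_le_add_iff_right (ENat.natCast_ne_top _)).1 hcard
  exact hM A (M.E \ A) <| Matroid.kSeparation_of_not_spanning_sdiff hAE hA hB
    fun hsp => hns (hsp.superset (sdiff_subset_sdiff_right hYA) sdiff_subset)

theorem stmt_3_general {α : Type*} (M : Matroid α) (k : ℕ)
    (hMconn : KConnected M k) (hcard : ((2 * (k - 1) : ℕ) : ℕ∞) ≤ M.E.encard)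
    (Y : Set α) (hY : Y ⊆ M.E) (hYcard : Y.encard < (k : ℕ∞)) :
    matroidERank (matroidDelete M Y) = matroidERank M := by
  rw [Matroid.matroidERank_eq_eRank, Matroid.matroidERank_eq_eRank]
  exact (hMconn.spanning_sdiff hcard hY hYcard).eRank_restrict

/-- Corollary 2.5: If `M` is a `k`-connected matroid with ground set `S`, `|S| ≥ 2(k-1)`,
then for every `Y ⊆ S` with `|Y| < k` the deletion `M \ Y` has the same rank as `M`. -/
theorem stmt_3 {α : Type*} (M : Matroid α) (k : ℕ) (hk : 2 ≤ k)
    (hMconn : KConnected M k) (hcard : ((2 * (k - 1) : ℕ) : ℕ∞) ≤ M.E.encard)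
    (Y : Set α) (hY : Y ⊆ M.E) (hYcard : Y.encard < (k : ℕ∞)) :
    matroidERank (matroidDelete M Y) = matroidERank M :=
  stmt_3_general M k hMconn hcard Y hY hYcard
end

section
/- Let M be a binary matroid with ground set S, let X be a nonempty independent set in M, and let M^X be the Γ-extension of M with ground set S ∪ Γ. Let r and r' denote the rank functions of M and M^X respectively. Then for every subset A ⊆ S ∪ Γ with A ∩ Γ ≠ ∅, one has r'(A) ≥ r(S ∩ A) + 1. -/
open Set
open scoped Classical

/-! An independent set `I ⊆ S ∩ T` of `M` stays independent in `M^X`, since its columns are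
padded by `0` in the new row; adding any `γ ∈ T ∩ Γ`, whose column has `1` in the new row,
keeps it independent, because the new-row coordinate vanishes on the span of `I`. -/

theorem matroidERk_add_one_le_of_forall_indep_insert {α : Type*} {M N : Matroid α}
    {A B : Set α}
    (h : ∀ I, M.Indep I → I ⊆ A → ∃ e ∉ I, N.Indep (insert e I) ∧ insert e I ⊆ B) :
    matroidERk M A + 1 ≤ matroidERk N B := by
  have : Nonempty {I : Set α // M.Indep I ∧ I ⊆ A} := ⟨⟨∅, M.empty_indep, empty_subset A⟩⟩
  rw [matroidERk, ENat.iSup_add]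
  refine iSup_le fun ⟨I, hI, hIA⟩ => ?_
  obtain ⟨e, heI, hN, heB⟩ := h I hI hIA
  calc I.encard + 1 = (insert e I).encard := (encard_insert_of_notMem heI).symm
    _ ≤ matroidERk N B :=
      le_iSup (fun J : {J : Set α // N.Indep J ∧ J ⊆ B} => (J : Set α).encard) ⟨_, hN, heB⟩

theorem LinearIndepOn.insert_of_map_eq_zero {K V ι : Type*} [DivisionRing K] [AddCommGroup V]
    [Module K V] {v : ι → V} {s : Set ι} {a : ι} (φ : V →ₗ[K] K) (hs : LinearIndepOn K v s)
    (hφs : ∀ i ∈ s, φ (v i) = 0) (ha : φ (v a) ≠ 0) : LinearIndepOn K v (insert a s) := by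
  refine hs.insert fun hspan => ha ?_
  have hle : Submodule.span K (v '' s) ≤ LinearMap.ker φ := by
    rw [Submodule.span_le]
    rintro _ ⟨i, hi, rfl⟩
    exact hφs i hi
  exact hle hspan

section GammaExtension

variable {α ρ ι : Type*} (A : α → ρ → ZMod 2) (x g : ι → α)

theorem gammaCols_apply_none_of_mem_range (j : ι) : gammaCols A x g (g j) none = 1 :=
  dif_pos ⟨j, rfl⟩

variable {A x g}

theorem gammaCols_apply_none_of_notMem_range {e : α} (he : e ∉ Set.range g) :
    gammaCols A x g e none = 0 :=
  dif_neg he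

theorem gammaCols_apply_some_of_notMem_range {e : α} (he : e ∉ Set.range g) (r : ρ) :
    gammaCols A x g e (some r) = A e r :=
  dif_neg he

/-- Deleting the new row recovers the old columns, so independent old columns stay independent. -/
theorem LinearIndepOn.gammaCols {I : Set α} (hI : LinearIndepOn (ZMod 2) A I)
    (hIg : Disjoint I (Set.range g)) : LinearIndepOn (ZMod 2) (gammaCols A x g) I := by
  refine LinearIndepOn.of_comp (LinearMap.funLeft (ZMod 2) (ZMod 2) some) ?_
  refine hI.congr fun e he => ?_
  funext r
  exact (gammaCols_apply_some_of_notMem_range (disjoint_left.mp hIg he) r).symm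

theorem gammaCols_linearIndepOn_insert {I : Set α} (hI : LinearIndepOn (ZMod 2) A I)
    (hIg : Disjoint I (Set.range g)) (j : ι) :
    LinearIndepOn (ZMod 2) (gammaCols A x g) (insert (g j) I) :=
  (hI.gammaCols hIg).insert_of_map_eq_zero (LinearMap.proj none)
    (fun _ he => gammaCols_apply_none_of_notMem_range (disjoint_left.mp hIg he))
    (by simp [gammaCols_apply_none_of_mem_range])

end GammaExtension

theorem stmt_6_general {α ρ ι : Type*}
    (M MX : Matroid α) (S : Set α) (A : α → ρ → ZMod 2) (x g : ι → α)
    (hdisj : Disjoint S (Set.range g))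
    (hM : IsBinaryRep M S A)
    (hMX : IsBinaryRep MX (S ∪ Set.range g) (gammaCols A x g)) :
    ∀ T : Set α, T ⊆ S ∪ Set.range g → (T ∩ Set.range g).Nonempty →
      matroidERk M (S ∩ T) + 1 ≤ matroidERk MX T := by
  rintro T - ⟨_, hjT, j, rfl⟩
  refine matroidERk_add_one_le_of_forall_indep_insert fun I hI hIST => ?_
  obtain ⟨hIS, hIA⟩ := (hM.2 I).mp hI
  have hIg : Disjoint I (Set.range g) := hdisj.mono_left hIS
  refine ⟨g j, fun h => disjoint_left.mp hIg h (mem_range_self j), ?_,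
    insert_subset hjT (hIST.trans inter_subset_right)⟩
  rw [hMX.2]
  exact ⟨insert_subset (Or.inr (mem_range_self j)) (hIS.trans subset_union_left),
    gammaCols_linearIndepOn_insert hIA hIg j⟩

/-- Lemma 2.1(iii): For every subset `T` of `S ∪ Γ` meeting `Γ = range g`, the rank of `T`
in the Γ-extension `M^X` is at least `r(S ∩ T) + 1`. -/
theorem stmt_6 {α ρ ι : Type*} [Fintype ι] [Nonempty ι]
    (M MX : Matroid α) (S : Set α) (A : α → ρ → ZMod 2) (x g : ι → α)
    (hxinj : Function.Injective x) (hginj : Function.Injective g)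
    (hxS : Set.range x ⊆ S) (hdisj : Disjoint S (Set.range g))
    (hXindep : M.Indep (Set.range x))
    (hM : IsBinaryRep M S A)
    (hMX : IsBinaryRep MX (S ∪ Set.range g) (gammaCols A x g)) :
    ∀ T : Set α, T ⊆ S ∪ Set.range g → (T ∩ Set.range g).Nonempty →
      matroidERk M (S ∩ T) + 1 ≤ matroidERk MX T :=
  stmt_6_general M MX S A x g hdisj hM hMX
end

section
/- Let M be a binary matroid with ground set S, let X be a nonempty independent set in M, and let M^X be the Γ-extension of M. Then r(M^X) = r(M) + 1, where r denotes rank. -/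
/-!
A base `B` of `M` stays independent in `M^X`, since its columns only gain a zero entry in the new
row. Adjoining one new element `γ_i` keeps it independent, because the column of `γ_i` is the only
one with a nonzero entry in the new row, and the result spans `M^X`: every old column is spanned
by `B`, and every other `γ_j` is `γ_i + x_j - x_i`. So `M^X` has a base with `|B| + 1` elements.
-/

open Set
open scoped Classical

lemma matroidERank_eq_eRank {α : Type*} (M : Matroid α) : matroidERank M = M.eRank := by
  obtain ⟨B, hB⟩ := M.exists_isBase
  refine le_antisymm (iSup_le ?_) ?_
  · rintro ⟨I, hI, -⟩
    obtain ⟨B', hB', hIB'⟩ := hI.exists_isBase_superset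
    exact (encard_mono hIB').trans hB'.encard_eq_eRank.le
  · rw [← hB.encard_eq_eRank]
    exact le_iSup_of_le ⟨B, hB.indep, hB.subset_ground⟩ le_rfl

namespace IsBinaryRep

variable {α ρ : Type*} {M : Matroid α} {S B : Set α} {A : α → ρ → ZMod 2}

lemma isBase_iff (hM : IsBinaryRep M S A) :
    M.IsBase B ↔ B ⊆ S ∧ LinearIndepOn (ZMod 2) A B ∧
      ∀ e ∈ S, A e ∈ Submodule.span (ZMod 2) (A '' B) := by
  obtain ⟨hE, hIndep⟩ := hM
  constructor
  · intro hB
    obtain ⟨hBS, hli⟩ := (hIndep B).mp hB.indep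
    refine ⟨hBS, hli, fun e he => ?_⟩
    by_contra hnotin
    by_cases heB : e ∈ B
    · exact hnotin (Submodule.subset_span (mem_image_of_mem A heB))
    have hli' : LinearIndepOn (ZMod 2) A (insert e B) :=
      (linearIndepOn_insert heB).mpr ⟨hli, hnotin⟩
    exact (hB.insert_dep ⟨hE ▸ he, heB⟩).not_indep
      ((hIndep _).mpr ⟨insert_subset he hBS, hli'⟩)
  · rintro ⟨hBS, hli, hspan⟩
    refine ((hIndep B).mpr ⟨hBS, hli⟩).isBase_of_forall_insert fun e ⟨heE, heB⟩ hins => ?_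
    exact ((linearIndepOn_insert heB).mp ((hIndep _).mp hins).2).2 (hspan e (hE ▸ heE))

end IsBinaryRep

def extendNone (K ρ : Type*) [Semiring K] : (ρ → K) →ₗ[K] (Option ρ → K) where
  toFun v o := o.elim 0 v
  map_add' _ _ := by funext o; cases o <;> simp
  map_smul' _ _ := by funext o; cases o <;> simp

lemma extendNone_injective (K ρ : Type*) [Semiring K] : Function.Injective (extendNone K ρ) :=
  fun _ _ h => funext fun r => congrFun h (some r)

section GammaCols

variable {α ρ ι : Type*} {S B : Set α} {A : α → ρ → ZMod 2} {x g : ι → α}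

lemma gammaCols_of_notMem_range_s7 {e : α} (he : e ∉ range g) :
    gammaCols A x g e = extendNone (ZMod 2) ρ (A e) := by
  have hne : ¬ ∃ i, g i = e := fun ⟨i, hi⟩ => he ⟨i, hi⟩
  funext o
  cases o <;> simp [gammaCols, hne, extendNone]

lemma gammaCols_eqOn (hdisj : Disjoint S (range g)) :
    EqOn (gammaCols A x g) (extendNone (ZMod 2) ρ ∘ A) S :=
  fun _ he => gammaCols_of_notMem_range_s7 (hdisj.notMem_of_mem_left he)

lemma gammaCols_apply (hg : Function.Injective g) (i : ι) :
    gammaCols A x g (g i) = extendNone (ZMod 2) ρ (A (x i)) + Pi.single none 1 := by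
  have hex : ∃ j, g j = g i := ⟨i, rfl⟩
  have hch : hex.choose = i := hg hex.choose_spec
  funext o
  cases o <;> simp [gammaCols, hch, extendNone]

lemma span_gammaCols_image (hdisj : Disjoint S (range g)) (hBS : B ⊆ S) :
    Submodule.span (ZMod 2) (gammaCols A x g '' B) =
      (Submodule.span (ZMod 2) (A '' B)).map (extendNone (ZMod 2) ρ) := by
  rw [← Submodule.span_image, ← image_comp, image_congr ((gammaCols_eqOn hdisj).mono hBS)]

end GammaCols

lemma IsBinaryRep.isBase_insert_gamma {α ρ ι : Type*} {M MX : Matroid α} {S B : Set α}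
    {A : α → ρ → ZMod 2} {x g : ι → α} (hginj : Function.Injective g)
    (hxS : range x ⊆ S) (hdisj : Disjoint S (range g)) (hM : IsBinaryRep M S A)
    (hMX : IsBinaryRep MX (S ∪ range g) (gammaCols A x g)) (hB : M.IsBase B) (i : ι) :
    MX.IsBase (insert (g i) B) := by
  set col := gammaCols A x g
  obtain ⟨hBS, hliB, hspanB⟩ := hM.isBase_iff.mp hB
  have hcolS : EqOn col (extendNone (ZMod 2) ρ ∘ A) S := gammaCols_eqOn hdisj
  have hcolg : ∀ j, col (g j) = extendNone (ZMod 2) ρ (A (x j)) + Pi.single none 1 :=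
    gammaCols_apply hginj
  have hspan : Submodule.span (ZMod 2) (col '' B) =
      (Submodule.span (ZMod 2) (A '' B)).map (extendNone (ZMod 2) ρ) :=
    span_gammaCols_image hdisj hBS
  have hgB : g i ∉ B := fun h => hdisj.notMem_of_mem_left (hBS h) (mem_range_self i)
  have hspanS : ∀ e ∈ S, col e ∈ Submodule.span (ZMod 2) (col '' B) := fun e he => by
    rw [hspan, hcolS he]
    exact Submodule.mem_map_of_mem (hspanB e he)
  have hnotin : col (g i) ∉ Submodule.span (ZMod 2) (col '' B) := by
    rw [hspan]
    rintro ⟨v, -, hv⟩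
    simpa [hcolg, extendNone] using congrFun hv none
  have hliB' : LinearIndepOn (ZMod 2) col B :=
    (hliB.map_injOn _ (extendNone_injective _ _).injOn).congr (hcolS.mono hBS).symm
  refine hMX.isBase_iff.mpr ⟨insert_subset (Or.inr (mem_range_self i))
    (hBS.trans subset_union_left), (linearIndepOn_insert hgB).mpr ⟨hliB', hnotin⟩, ?_⟩
  set W := Submodule.span (ZMod 2) (col '' insert (g i) B)
  have hmono : Submodule.span (ZMod 2) (col '' B) ≤ W :=
    Submodule.span_mono (image_mono (subset_insert _ _))
  have hxW : ∀ j, col (x j) ∈ W := fun j => hmono (hspanS _ (hxS (mem_range_self j)))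
  rintro e (he | ⟨j, rfl⟩)
  · exact hmono (hspanS e he)
  have hgj : col (g j) = col (x j) - col (x i) + col (g i) := by
    rw [hcolg, hcolg, hcolS (hxS (mem_range_self i)), hcolS (hxS (mem_range_self j))]
    simp only [Function.comp_apply]
    abel
  rw [hgj]
  exact add_mem (sub_mem (hxW j) (hxW i)) 
    (Submodule.subset_span (mem_image_of_mem col (mem_insert _ _)))

theorem stmt_7_general {α ρ ι : Type*} [Nonempty ι]
    (M MX : Matroid α) (S : Set α) (A : α → ρ → ZMod 2) (x g : ι → α)
    (hginj : Function.Injective g)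
    (hxS : Set.range x ⊆ S) (hdisj : Disjoint S (Set.range g))
    (hM : IsBinaryRep M S A)
    (hMX : IsBinaryRep MX (S ∪ Set.range g) (gammaCols A x g)) :
    matroidERank MX = matroidERank M + 1 := by
  obtain ⟨B, hB⟩ := M.exists_isBase
  obtain ⟨i⟩ := ‹Nonempty ι›
  have hBS : B ⊆ S := hM.1 ▸ hB.subset_ground
  have hgB : g i ∉ B := fun h => hdisj.notMem_of_mem_left (hBS h) (mem_range_self i)
  have hB' := hM.isBase_insert_gamma hginj hxS hdisj hMX hB i
  rw [matroidERank_eq_eRank, matroidERank_eq_eRank, ← hB.encard_eq_eRank,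
    ← hB'.encard_eq_eRank, encard_insert_of_notMem hgB]

/-- Lemma 2.1(iv): The rank of the Γ-extension `M^X` is `r(M) + 1`. -/
theorem stmt_7 {α ρ ι : Type*} [Fintype ι] [Nonempty ι]
    (M MX : Matroid α) (S : Set α) (A : α → ρ → ZMod 2) (x g : ι → α)
    (hxinj : Function.Injective x) (hginj : Function.Injective g)
    (hxS : Set.range x ⊆ S) (hdisj : Disjoint S (Set.range g))
    (hXindep : M.Indep (Set.range x))
    (hM : IsBinaryRep M S A)
    (hMX : IsBinaryRep MX (S ∪ Set.range g) (gammaCols A x g)) :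
    matroidERank MX = matroidERank M + 1 :=
  stmt_7_general M MX S A x g hginj hxS hdisj hM hMX
end
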